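/- arXiv:1003.2070 — 3 statements merged into one kernel-verified Lean document; each statement's English description precedes it below -/
import Mathlib

section
/- The category M(X) of representations of a finite crossed module X, with objects finite-dimensional X₂-graded vector spaces V = ⊕_{m∈X₂} V_m equipped with an X₁-action Q satisfying P(m)Q(g) = Q(g)P(m^g) (where P(m) is the projection onto V_m), is a k-linear abelian category with tensor product given by (V⊗W)_m = ⊕_{nl=m} V_n ⊗ W_l and diagonal X₁-action; the maps R_{V,W}(v⊗w) = Σ_{m∈X₂} Q_W(∂m)w ⊗ P_V(m)v define a braiding on this tensor category. -/
/-- A crossed module: groups `X₁`, `X₂`, a right action of `X₁` on `X₂` by group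
automorphisms (written `act m g` for `m^g`), and a boundary homomorphism
`δ : X₂ →* X₁` satisfying equivariance and the Peiffer identity. -/
structure CrossedModule (X₁ X₂ : Type) [Group X₁] [Group X₂] where
  act : X₂ → X₁ → X₂
  act_one : ∀ m : X₂, act m 1 = m
  act_mul : ∀ (m : X₂) (g h : X₁), act m (g * h) = act (act m g) h
  act_hom : ∀ (m n : X₂) (g : X₁), act (m * n) g = act m g * act n g
  δ : X₂ →* X₁
  equivariance : ∀ (m : X₂) (g : X₁), δ (act m g) = g⁻¹ * δ m * g
  peiffer : ∀ m n : X₂, act m (δ n) = n⁻¹ * m * n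

section Representations
open TensorProduct

variable {F : Type} [Field F] {X₁ X₂ : Type} [Group X₁] [Group X₂] [Fintype X₁] [Fintype X₂] [DecidableEq X₂]

/-- A representation of the crossed module `X` on the `F`-vector space `V`:
an `X₂`-grading, encoded by the family of projections `P m` onto the graded
components, together with an `X₁`-action `Q` such that `P(m)Q(g) = Q(g)P(m^g)`.
These are the objects of the category `M(X)`. -/
structure XRep (F : Type) [Field F] {X₁ X₂ : Type} [Group X₁] [Group X₂] [Fintype X₂] [DecidableEq X₂]
    (X : CrossedModule X₁ X₂)
    (V : Type) [AddCommGroup V] [Module F V] where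
  P : X₂ → (V →ₗ[F] V)
  Q : X₁ → (V →ₗ[F] V)
  P_orth : ∀ m n : X₂, (P m) ∘ₗ (P n) = if m = n then P m else 0
  P_total : (∑ m : X₂, P m) = LinearMap.id
  Q_one : Q 1 = LinearMap.id
  Q_mul : ∀ g h : X₁, Q (g * h) = Q g ∘ₗ Q h
  PQ_compat : ∀ (m : X₂) (g : X₁), (P m) ∘ₗ (Q g) = (Q g) ∘ₗ (P (X.act m g))

variable {X : CrossedModule X₁ X₂}
variable {U V W U' V' W' : Type}
  [AddCommGroup U] [Module F U] [AddCommGroup V] [Module F V] [AddCommGroup W] [Module F W]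
  [AddCommGroup U'] [Module F U'] [AddCommGroup V'] [Module F V'] [AddCommGroup W'] [Module F W']

/-- The grading of the tensor product: `(V ⊗ W)_m = ⊕_{nl = m} V_n ⊗ W_l`. -/
noncomputable def tensorP (A : XRep F X V) (B : XRep F X W) (m : X₂) :
    (V ⊗[F] W) →ₗ[F] (V ⊗[F] W) :=
  ∑ n : X₂, TensorProduct.map (A.P n) (B.P (n⁻¹ * m))

/-- The diagonal `X₁`-action on the tensor product. -/
noncomputable def tensorQ (A : XRep F X V) (B : XRep F X W) (g : X₁) :
    (V ⊗[F] W) →ₗ[F] (V ⊗[F] W) :=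
  TensorProduct.map (A.Q g) (B.Q g)

/-- The braiding `R_{V,W}(v ⊗ w) = ∑_{m ∈ X₂} Q_W(∂m) w ⊗ P_V(m) v`, written in terms
of the grading data `PA` on `V` and the action data `QB` on `W`. -/
noncomputable def braidAux (X : CrossedModule X₁ X₂)
    (PA : X₂ → (V →ₗ[F] V)) (QB : X₁ → (W →ₗ[F] W)) :
    (V ⊗[F] W) →ₗ[F] (W ⊗[F] V) :=
  ∑ m : X₂, (TensorProduct.map (QB (X.δ m)) (PA m)) ∘ₗ
    (TensorProduct.comm F V W).toLinearMap

/-- The braiding `R_{V,W}` between two crossed-module representations. -/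
noncomputable def braid (A : XRep F X V) (B : XRep F X W) :
    (V ⊗[F] W) →ₗ[F] (W ⊗[F] V) :=
  braidAux X A.P B.Q

/-- Morphisms in `M(X)`: linear maps compatible with the grading and the action. -/
def IsXRepHom (A : XRep F X V) (B : XRep F X W) (f : V →ₗ[F] W) : Prop :=
  (∀ m : X₂, f ∘ₗ A.P m = B.P m ∘ₗ f) ∧ (∀ g : X₁, f ∘ₗ A.Q g = B.Q g ∘ₗ f)

end Representations

/-!
All identities are checked on pure tensors, where they reduce to two facts. The projections
`P(m)` are orthogonal idempotents summing to the identity, so a sum `∑ₚ xₚ ⊗ P(p) P(m) v`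
collapses to its term `p = m`. The crossed-module axioms move gradings past actions: by the
Peiffer identity `P(m) Q(∂n) = Q(∂n) P(n⁻¹ m n)`, which makes `R` respect the grading, and by
equivariance `Q(g) Q(∂(m^g)) = Q(∂m) Q(g)`, which makes `R` respect the action. The inverse of
`R` is `v ⊗ u ↦ ∑ₘ P(m) u ⊗ Q(∂m)⁻¹ v`.
-/

namespace CrossedModule

variable {X₁ X₂ : Type} [Group X₁] [Group X₂] (X : CrossedModule X₁ X₂)

def actEquiv (g : X₁) : X₂ ≃* X₂ where
  toFun m := X.act m g
  invFun m := X.act m g⁻¹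
  left_inv m := by dsimp only; rw [← X.act_mul, mul_inv_cancel, X.act_one]
  right_inv m := by dsimp only; rw [← X.act_mul, inv_mul_cancel, X.act_one]
  map_mul' m n := X.act_hom m n g

end CrossedModule

lemma LinearMap.mem_ker_of_comp_eq_comp {R M N : Type*} [Semiring R] [AddCommMonoid M] [Module R M]
    [AddCommMonoid N] [Module R N] {f : M →ₗ[R] N} {S : M →ₗ[R] M} {T : N →ₗ[R] N}
    (h : f ∘ₗ S = T ∘ₗ f) {x : M} (hx : x ∈ LinearMap.ker f) :
    S x ∈ LinearMap.ker f := by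
  have := LinearMap.ker_le_ker_comp f T hx
  rwa [← h] at this

namespace XRep

open TensorProduct

variable {F : Type} [Field F] {X₁ X₂ : Type} [Group X₁] [Group X₂] [Fintype X₂]
  [DecidableEq X₂] {X : CrossedModule X₁ X₂} {V W M : Type} [AddCommGroup V] [Module F V]
  [AddCommGroup W] [Module F W] [AddCommGroup M] [Module F M]
  (A : XRep F X V)

lemma P_P_apply (m n : X₂) (v : V) : A.P m (A.P n v) = if m = n then A.P m v else 0 := by
  rw [← LinearMap.comp_apply, A.P_orth]
  split_ifs <;> rfl

lemma sum_P_apply (v : V) : ∑ m, A.P m v = v := by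
  rw [← LinearMap.sum_apply, A.P_total, LinearMap.id_apply]

lemma P_Q_apply (m : X₂) (g : X₁) (v : V) : A.P m (A.Q g v) = A.Q g (A.P (X.act m g) v) :=
  LinearMap.congr_fun (A.PQ_compat m g) v

lemma Q_mul_apply (g h : X₁) (v : V) : A.Q (g * h) v = A.Q g (A.Q h v) :=
  LinearMap.congr_fun (A.Q_mul g h) v

lemma Q_inv_Q_apply (g : X₁) (v : V) : A.Q g⁻¹ (A.Q g v) = v := by
  rw [← Q_mul_apply, inv_mul_cancel, A.Q_one, LinearMap.id_apply]

lemma Q_Q_inv_apply (g : X₁) (v : V) : A.Q g (A.Q g⁻¹ v) = v := by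
  rw [← Q_mul_apply, mul_inv_cancel, A.Q_one, LinearMap.id_apply]

lemma sum_map_P_P (φ : X₂ → V →ₗ[F] M) (m : X₂) (v : V) :
    ∑ p, φ p (A.P p (A.P m v)) = φ m (A.P m v) := by
  simp only [P_P_apply, apply_ite, map_zero, Finset.sum_ite_eq', Finset.mem_univ, if_true]

lemma sum_tmul_P_P (w : X₂ → W) (m : X₂) (v : V) :
    ∑ p, w p ⊗ₜ[F] A.P p (A.P m v) = w m ⊗ₜ A.P m v :=
  A.sum_map_P_P (fun p => TensorProduct.mk F W V (w p)) m v

lemma sum_P_P_tmul (w : X₂ → W) (m : X₂) (v : V) :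
    ∑ p, A.P p (A.P m v) ⊗ₜ[F] w p = A.P m v ⊗ₜ w m :=
  A.sum_map_P_P (fun p => (TensorProduct.mk F V W).flip (w p)) m v

def homSubmodule (B : XRep F X W) : Submodule F (V →ₗ[F] W) where
  carrier := {f | IsXRepHom A B f}
  zero_mem' := ⟨fun m => by rw [LinearMap.zero_comp, LinearMap.comp_zero],
    fun g => by rw [LinearMap.zero_comp, LinearMap.comp_zero]⟩
  add_mem' {f h} hf hh := ⟨fun m => by rw [LinearMap.add_comp, LinearMap.comp_add, hf.1, hh.1],
    fun g => by rw [LinearMap.add_comp, LinearMap.comp_add, hf.2, hh.2]⟩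
  smul_mem' c f hf := ⟨fun m => by rw [LinearMap.smul_comp, LinearMap.comp_smul, hf.1],
    fun g => by rw [LinearMap.smul_comp, LinearMap.comp_smul, hf.2]⟩

def restrict (S : Submodule F V) (hP : ∀ m, ∀ v ∈ S, A.P m v ∈ S)
    (hQ : ∀ g, ∀ v ∈ S, A.Q g v ∈ S) : XRep F X S where
  P m := (A.P m).restrict (hP m)
  Q g := (A.Q g).restrict (hQ g)
  P_orth m n := by
    ext v
    simp only [LinearMap.comp_apply, LinearMap.coe_restrict_apply, A.P_P_apply]
    split_ifs <;> rfl
  P_total := by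
    ext v
    simp only [LinearMap.sum_apply, Submodule.coe_sum, LinearMap.coe_restrict_apply,
      A.sum_P_apply, LinearMap.id_apply]
  Q_one := by
    ext v
    simp only [LinearMap.coe_restrict_apply, A.Q_one, LinearMap.id_apply]
  Q_mul g h := by
    ext v
    exact A.Q_mul_apply g h v
  PQ_compat m g := by
    ext v
    exact A.P_Q_apply m g v

lemma isXRepHom_subtype_restrict (S : Submodule F V) (hP : ∀ m, ∀ v ∈ S, A.P m v ∈ S)
    (hQ : ∀ g, ∀ v ∈ S, A.Q g v ∈ S) : IsXRepHom (A.restrict S hP hQ) A S.subtype :=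
  ⟨fun _ => rfl, fun _ => rfl⟩

end XRep

lemma IsXRepHom.exists_xrep_ker {F : Type} [Field F] {X₁ X₂ : Type} [Group X₁] [Group X₂]
    [Fintype X₂] [DecidableEq X₂] {X : CrossedModule X₁ X₂} {V W : Type} [AddCommGroup V]
    [Module F V] [AddCommGroup W] [Module F W] {A : XRep F X V} {B : XRep F X W}
    {f : V →ₗ[F] W} (hf : IsXRepHom A B f) :
    ∃ K : XRep F X (LinearMap.ker f), IsXRepHom K A (LinearMap.ker f).subtype :=
  ⟨A.restrict _ (fun m _ => LinearMap.mem_ker_of_comp_eq_comp (hf.1 m))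
    (fun g _ => LinearMap.mem_ker_of_comp_eq_comp (hf.2 g)), A.isXRepHom_subtype_restrict _ _ _⟩

section

open TensorProduct

variable {F : Type} [Field F] {X₁ X₂ : Type} [Group X₁] [Group X₂] [Fintype X₂]
  {X : CrossedModule X₁ X₂} {U V W U' V' : Type}
  [AddCommGroup U] [Module F U] [AddCommGroup V] [Module F V] [AddCommGroup W] [Module F W]
  [AddCommGroup U'] [Module F U'] [AddCommGroup V'] [Module F V']

lemma braidAux_tmul (PA : X₂ → U →ₗ[F] U) (QB : X₁ → V →ₗ[F] V) (u : U) (v : V) :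
    braidAux X PA QB (u ⊗ₜ[F] v) = ∑ m, QB (X.δ m) v ⊗ₜ[F] PA m u := by
  simp only [braidAux, LinearMap.sum_apply, LinearMap.comp_apply, LinearEquiv.coe_coe, comm_tmul,
    map_tmul]

variable [DecidableEq X₂] (A : XRep F X U) (B : XRep F X V)

lemma tensorP_tmul (m : X₂) (u : U) (v : V) :
    tensorP A B m (u ⊗ₜ[F] v) = ∑ n, A.P n u ⊗ₜ[F] B.P (n⁻¹ * m) v := by
  simp only [tensorP, LinearMap.sum_apply, map_tmul]

lemma tensorQ_tmul (g : X₁) (u : U) (v : V) :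
    tensorQ A B g (u ⊗ₜ[F] v) = A.Q g u ⊗ₜ[F] B.Q g v :=
  rfl

lemma tensorP_comp_tensorP (m m' : X₂) :
    tensorP A B m ∘ₗ tensorP A B m' = if m = m' then tensorP A B m else 0 := by
  ext u v
  simp only [AlgebraTensorModule.curry_apply, curry_apply, LinearMap.restrictScalars_apply,
    LinearMap.comp_apply, tensorP_tmul, map_sum, A.sum_P_P_tmul, B.P_P_apply, mul_right_inj]
  split_ifs
  · rw [tensorP_tmul]
  · simp only [tmul_zero, Finset.sum_const_zero, LinearMap.zero_apply]

lemma sum_tensorP : ∑ m, tensorP A B m = LinearMap.id := by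
  ext u v
  have sum_P_shift (n : X₂) : ∑ m, B.P (n⁻¹ * m) v = v :=
    (Equiv.sum_comp (Equiv.mulLeft n⁻¹) fun m => B.P m v).trans (B.sum_P_apply v)
  simp only [AlgebraTensorModule.curry_apply, curry_apply, LinearMap.restrictScalars_apply,
    LinearMap.sum_apply, tensorP_tmul, LinearMap.id_apply]
  rw [Finset.sum_comm]
  simp only [← tmul_sum, sum_P_shift, ← sum_tmul, A.sum_P_apply]

lemma tensorP_comp_tensorQ (m : X₂) (g : X₁) :
    tensorP A B m ∘ₗ tensorQ A B g = tensorQ A B g ∘ₗ tensorP A B (X.act m g) := by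
  ext u v
  simp only [AlgebraTensorModule.curry_apply, curry_apply, LinearMap.restrictScalars_apply,
    LinearMap.comp_apply, tensorQ_tmul, tensorP_tmul, map_sum, A.P_Q_apply, B.P_Q_apply]
  refine Fintype.sum_equiv (X.actEquiv g).toEquiv _ _ fun n => ?_
  have act_mul_act : X.act (n⁻¹ * m) g = (X.act n g)⁻¹ * X.act m g := by
    show X.actEquiv g (n⁻¹ * m) = (X.actEquiv g n)⁻¹ * X.actEquiv g m
    rw [map_mul, map_inv]
  rw [act_mul_act]
  rfl

noncomputable def tensorXRep : XRep F X (U ⊗[F] V) where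
  P := tensorP A B
  Q := tensorQ A B
  P_orth := tensorP_comp_tensorP A B
  P_total := sum_tensorP A B
  Q_one := by rw [tensorQ, A.Q_one, B.Q_one, map_id]
  Q_mul g h := by rw [tensorQ, A.Q_mul, B.Q_mul, map_comp]; rfl
  PQ_compat := tensorP_comp_tensorQ A B

lemma braid_tmul (u : U) (v : V) :
    braid A B (u ⊗ₜ[F] v) = ∑ m, B.Q (X.δ m) v ⊗ₜ[F] A.P m u :=
  braidAux_tmul A.P B.Q u v

lemma braid_comp_tensorP (m' : X₂) :
    braid A B ∘ₗ tensorP A B m' = tensorP B A m' ∘ₗ braid A B := by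
  ext u v
  simp only [AlgebraTensorModule.curry_apply, curry_apply, LinearMap.restrictScalars_apply,
    LinearMap.comp_apply, tensorP_tmul, braid_tmul, map_sum, A.sum_tmul_P_P]
  refine Finset.sum_congr rfl fun n _ => ?_
  -- the only `p` contributing to the inner sum is `p = m' n⁻¹`
  have reindex : ∑ p, B.P p (B.Q (X.δ n) v) ⊗ₜ[F] A.P (p⁻¹ * m') (A.P n u) =
      ∑ q, B.P (m' * q⁻¹) (B.Q (X.δ n) v) ⊗ₜ[F] A.P q (A.P n u) := by
    refine Fintype.sum_equiv ((Equiv.inv X₂).trans (Equiv.mulRight m')) _ _ fun p => ?_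
    simp only [Equiv.trans_apply, Equiv.inv_apply, Equiv.coe_mulRight, mul_inv_rev, inv_inv,
      mul_inv_cancel_left]
  rw [reindex, A.sum_tmul_P_P, B.P_Q_apply, X.peiffer]
  congr 3
  group

lemma braid_comp_tensorQ (g : X₁) :
    braid A B ∘ₗ tensorQ A B g = tensorQ B A g ∘ₗ braid A B := by
  ext u v
  simp only [AlgebraTensorModule.curry_apply, curry_apply, LinearMap.restrictScalars_apply,
    LinearMap.comp_apply, tensorQ_tmul, braid_tmul, map_sum]
  refine Fintype.sum_equiv (X.actEquiv g).toEquiv _ _ fun n => ?_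
  rw [A.P_Q_apply, ← B.Q_mul_apply, ← B.Q_mul_apply]
  show B.Q (X.δ n * g) v ⊗ₜ[F] _ = B.Q (g * X.δ (X.act n g)) v ⊗ₜ[F] _
  rw [X.equivariance, show g * (g⁻¹ * X.δ n * g) = X.δ n * g by group]
  rfl

noncomputable def braidInv : (V ⊗[F] U) →ₗ[F] (U ⊗[F] V) :=
  ∑ m, map (A.P m) (B.Q (X.δ m)⁻¹) ∘ₗ (TensorProduct.comm F V U).toLinearMap

lemma braidInv_tmul (v : V) (u : U) :
    braidInv A B (v ⊗ₜ[F] u) = ∑ m, A.P m u ⊗ₜ[F] B.Q (X.δ m)⁻¹ v := by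
  simp only [braidInv, LinearMap.sum_apply, LinearMap.comp_apply, LinearEquiv.coe_coe, comm_tmul,
    map_tmul]

lemma braidInv_comp_braid : braidInv A B ∘ₗ braid A B = LinearMap.id := by
  ext u v
  simp only [AlgebraTensorModule.curry_apply, curry_apply, LinearMap.restrictScalars_apply,
    LinearMap.comp_apply, braid_tmul, map_sum, braidInv_tmul, A.sum_P_P_tmul, B.Q_inv_Q_apply,
    ← sum_tmul, A.sum_P_apply, LinearMap.id_apply]

lemma braid_comp_braidInv : braid A B ∘ₗ braidInv A B = LinearMap.id := by
  ext v u
  simp only [AlgebraTensorModule.curry_apply, curry_apply, LinearMap.restrictScalars_apply,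
    LinearMap.comp_apply, braidInv_tmul, map_sum, braid_tmul, A.sum_tmul_P_P, B.Q_Q_inv_apply,
    ← tmul_sum, A.sum_P_apply, LinearMap.id_apply]

lemma braid_bijective : Function.Bijective (braid A B) :=
  Function.bijective_iff_has_inverse.mpr ⟨braidInv A B,
    LinearMap.congr_fun (braidInv_comp_braid A B), LinearMap.congr_fun (braid_comp_braidInv A B)⟩

lemma braid_comp_map {A' : XRep F X U'} {B' : XRep F X V'} {f : U →ₗ[F] U'} {h : V →ₗ[F] V'}
    (hf : IsXRepHom A A' f) (hh : IsXRepHom B B' h) :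
    braid A' B' ∘ₗ map f h = map h f ∘ₗ braid A B := by
  ext u v
  simp only [AlgebraTensorModule.curry_apply, curry_apply, LinearMap.restrictScalars_apply,
    LinearMap.comp_apply, map_tmul, braid_tmul, map_sum]
  refine Finset.sum_congr rfl fun m _ => ?_
  rw [← LinearMap.comp_apply (A'.P m), ← hf.1, ← LinearMap.comp_apply (B'.Q _), ← hh.2]
  rfl

variable (C : XRep F X W)

lemma hexagon_forward :
    braid A (tensorXRep B C) =
      (TensorProduct.assoc F V W U).symm.toLinearMap ∘ₗ map LinearMap.id (braid A C) ∘ₗ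
      (TensorProduct.assoc F V U W).toLinearMap ∘ₗ map (braid A B) LinearMap.id ∘ₗ
      (TensorProduct.assoc F U V W).symm.toLinearMap := by
  refine TensorProduct.ext_threefold' fun u v w => ?_
  simp only [LinearMap.comp_apply, LinearEquiv.coe_coe, assoc_symm_tmul, map_tmul, braid_tmul,
    LinearMap.id_apply, sum_tmul, map_sum, assoc_tmul, tmul_sum]
  refine Finset.sum_congr rfl fun m _ => ?_
  rw [A.sum_tmul_P_P (fun p => B.Q (X.δ m) v ⊗ₜ[F] C.Q (X.δ p) w)]
  rfl

lemma hexagon_reverse :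
    braid (tensorXRep A B) C =
      (TensorProduct.assoc F W U V).toLinearMap ∘ₗ map (braid A C) LinearMap.id ∘ₗ
      (TensorProduct.assoc F U W V).symm.toLinearMap ∘ₗ map LinearMap.id (braid B C) ∘ₗ
      (TensorProduct.assoc F U V W).toLinearMap := by
  refine TensorProduct.ext_threefold fun u v w => ?_
  simp only [LinearMap.comp_apply, LinearEquiv.coe_coe, assoc_tmul, map_tmul, braid_tmul,
    LinearMap.id_apply, tmul_sum, map_sum, assoc_symm_tmul, sum_tmul]
  change ∑ m, C.Q (X.δ m) w ⊗ₜ[F] tensorP A B m (u ⊗ₜ[F] v) = _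
  simp only [tensorP_tmul, tmul_sum]
  rw [Finset.sum_comm]
  conv_rhs => rw [Finset.sum_comm]
  refine Finset.sum_congr rfl fun n _ => ?_
  -- substitute `m = n l`, so that `Q(∂m) = Q(∂n) Q(∂l)`
  rw [← Equiv.sum_comp (Equiv.mulLeft n)]
  simp only [Equiv.coe_mulLeft, inv_mul_cancel_left, map_mul, C.Q_mul_apply]

end

open TensorProduct in
theorem MX_braided_category_general {F : Type} [Field F]
    {X₁ X₂ : Type} [Group X₁] [Group X₂] [Fintype X₂] [DecidableEq X₂]
    {X : CrossedModule X₁ X₂}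
    {U V W U' V' : Type}
    [AddCommGroup U] [Module F U]
    [AddCommGroup V] [Module F V]
    [AddCommGroup W] [Module F W]
    [AddCommGroup U'] [Module F U']
    [AddCommGroup V'] [Module F V']
    (A : XRep F X U) (B : XRep F X V) (C : XRep F X W) :
    -- `M(X)` is `F`-linear: morphism spaces are linear subspaces
    (IsXRepHom A B (0 : U →ₗ[F] V) ∧
      (∀ f g : U →ₗ[F] V, IsXRepHom A B f → IsXRepHom A B g → IsXRepHom A B (f + g)) ∧
      (∀ (c : F) (f : U →ₗ[F] V), IsXRepHom A B f → IsXRepHom A B (c • f))) ∧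
    -- kernels of morphisms exist (towards abelianness)
    (∀ f : U →ₗ[F] V, IsXRepHom A B f →
      ∃ K : XRep F X (LinearMap.ker f), IsXRepHom K A (LinearMap.ker f).subtype) ∧
    -- the tensor product of two objects is again an object of `M(X)`
    (∃ T : XRep F X (U ⊗[F] V), T.P = tensorP A B ∧ T.Q = tensorQ A B) ∧
    -- `R_{U,V}` is a morphism in `M(X)` …
    (∀ m : X₂, braid A B ∘ₗ tensorP A B m = tensorP B A m ∘ₗ braid A B) ∧
    (∀ g : X₁, braid A B ∘ₗ tensorQ A B g = tensorQ B A g ∘ₗ braid A B) ∧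
    -- … and an isomorphism
    Function.Bijective (braid A B) ∧
    -- naturality of the braiding
    (∀ (A' : XRep F X U') (B' : XRep F X V') (f : U →ₗ[F] U') (h : V →ₗ[F] V'),
      IsXRepHom A A' f → IsXRepHom B B' h →
      braid A' B' ∘ₗ TensorProduct.map f h = TensorProduct.map h f ∘ₗ braid A B) ∧
    -- hexagon identity for `R_{U, V ⊗ W}`
    (braidAux X A.P (tensorQ B C) =
      (TensorProduct.assoc F V W U).symm.toLinearMap ∘ₗ
      TensorProduct.map (LinearMap.id : V →ₗ[F] V) (braidAux X A.P C.Q) ∘ₗ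
      (TensorProduct.assoc F V U W).toLinearMap ∘ₗ
      TensorProduct.map (braidAux X A.P B.Q) (LinearMap.id : W →ₗ[F] W) ∘ₗ
      (TensorProduct.assoc F U V W).symm.toLinearMap) ∧
    -- hexagon identity for `R_{U ⊗ V, W}`
    (braidAux X (tensorP A B) C.Q =
      (TensorProduct.assoc F W U V).toLinearMap ∘ₗ
      TensorProduct.map (braidAux X A.P C.Q) (LinearMap.id : V →ₗ[F] V) ∘ₗ
      (TensorProduct.assoc F U W V).symm.toLinearMap ∘ₗ
      TensorProduct.map (LinearMap.id : U →ₗ[F] U) (braidAux X B.P C.Q) ∘ₗ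
      (TensorProduct.assoc F U V W).toLinearMap) :=
  ⟨⟨(A.homSubmodule B).zero_mem, fun _ _ => (A.homSubmodule B).add_mem,
      fun c _ => (A.homSubmodule B).smul_mem c⟩,
    fun _ hf => hf.exists_xrep_ker, ⟨tensorXRep A B, rfl, rfl⟩, braid_comp_tensorP A B,
    braid_comp_tensorQ A B, braid_bijective A B, fun _ _ _ _ => braid_comp_map A B,
    hexagon_forward A B C, hexagon_reverse A B C⟩

open TensorProduct in
/-- The category `M(X)` of representations of a finite crossed module `X` is a
`k`-linear abelian category (morphism spaces are linear subspaces and kernels of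
morphisms are again objects), the tensor product `(V ⊗ W)_m = ⊕_{nl=m} V_n ⊗ W_l`
with diagonal `X₁`-action makes it a tensor category (the tensor product of two
objects is again an object), and the maps
`R_{V,W}(v ⊗ w) = ∑_{m ∈ X₂} Q_W(∂m) w ⊗ P_V(m) v` define a braiding:
each `R_{V,W}` is an isomorphism in `M(X)`, natural in both arguments, and the
two hexagon identities hold. -/
theorem MX_braided_category {F : Type} [Field F] [IsAlgClosed F] [CharZero F]
    {X₁ X₂ : Type} [Group X₁] [Group X₂] [Fintype X₁] [Fintype X₂] [DecidableEq X₂]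
    {X : CrossedModule X₁ X₂}
    {U V W U' V' : Type}
    [AddCommGroup U] [Module F U] [FiniteDimensional F U]
    [AddCommGroup V] [Module F V] [FiniteDimensional F V]
    [AddCommGroup W] [Module F W] [FiniteDimensional F W]
    [AddCommGroup U'] [Module F U'] [FiniteDimensional F U']
    [AddCommGroup V'] [Module F V'] [FiniteDimensional F V']
    (A : XRep F X U) (B : XRep F X V) (C : XRep F X W) :
    -- `M(X)` is `F`-linear: morphism spaces are linear subspaces
    (IsXRepHom A B (0 : U →ₗ[F] V) ∧
      (∀ f g : U →ₗ[F] V, IsXRepHom A B f → IsXRepHom A B g → IsXRepHom A B (f + g)) ∧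
      (∀ (c : F) (f : U →ₗ[F] V), IsXRepHom A B f → IsXRepHom A B (c • f))) ∧
    -- kernels of morphisms exist (towards abelianness)
    (∀ f : U →ₗ[F] V, IsXRepHom A B f →
      ∃ K : XRep F X (LinearMap.ker f), IsXRepHom K A (LinearMap.ker f).subtype) ∧
    -- the tensor product of two objects is again an object of `M(X)`
    (∃ T : XRep F X (U ⊗[F] V), T.P = tensorP A B ∧ T.Q = tensorQ A B) ∧
    -- `R_{U,V}` is a morphism in `M(X)` …
    (∀ m : X₂, braid A B ∘ₗ tensorP A B m = tensorP B A m ∘ₗ braid A B) ∧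
    (∀ g : X₁, braid A B ∘ₗ tensorQ A B g = tensorQ B A g ∘ₗ braid A B) ∧
    -- … and an isomorphism
    Function.Bijective (braid A B) ∧
    -- naturality of the braiding
    (∀ (A' : XRep F X U') (B' : XRep F X V') (f : U →ₗ[F] U') (h : V →ₗ[F] V'),
      IsXRepHom A A' f → IsXRepHom B B' h →
      braid A' B' ∘ₗ TensorProduct.map f h = TensorProduct.map h f ∘ₗ braid A B) ∧
    -- hexagon identity for `R_{U, V ⊗ W}`
    (braidAux X A.P (tensorQ B C) =
      (TensorProduct.assoc F V W U).symm.toLinearMap ∘ₗ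
      TensorProduct.map (LinearMap.id : V →ₗ[F] V) (braidAux X A.P C.Q) ∘ₗ
      (TensorProduct.assoc F V U W).toLinearMap ∘ₗ
      TensorProduct.map (braidAux X A.P B.Q) (LinearMap.id : W →ₗ[F] W) ∘ₗ
      (TensorProduct.assoc F U V W).symm.toLinearMap) ∧
    -- hexagon identity for `R_{U ⊗ V, W}`
    (braidAux X (tensorP A B) C.Q =
      (TensorProduct.assoc F W U V).toLinearMap ∘ₗ
      TensorProduct.map (braidAux X A.P C.Q) (LinearMap.id : V →ₗ[F] V) ∘ₗ
      (TensorProduct.assoc F U W V).symm.toLinearMap ∘ₗ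
      TensorProduct.map (LinearMap.id : U →ₗ[F] U) (braidAux X B.P C.Q) ∘ₗ
      (TensorProduct.assoc F U V W).toLinearMap) :=
  MX_braided_category_general A B C
end

section
/- The vacuum object V_K = k[ker ∂] ⊗ k(coker ∂) with P(m)(x ⊗ δ_{Iy}) = δ(m^y, x)(x ⊗ δ_{Iy}) and Q(g)(x ⊗ δ_{Iy}) = x ⊗ δ_{Igy} is a well-defined object of the category M(X) of crossed-module representations; i.e., the grading projections and X₁-action satisfy P(m)Q(g) = Q(g)P(m^g). -/
section Vacuum

variable (F : Type) [Field F] {X₁ X₂ : Type} [Group X₁] [Group X₂]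
  [Fintype X₁] [Fintype X₂] [DecidableEq X₂]
  (X : CrossedModule X₁ X₂) [X.δ.range.Normal]

/-- The underlying vector space `k[ker ∂] ⊗ k(coker ∂)` of the vacuum object,
realized as the space of `F`-valued functions on `(ker ∂) × (coker ∂)`;
the basis vector `x ⊗ δ_{Iy}` corresponds to the indicator function of `(x, Iy)`. -/
abbrev VacuumCarrier : Type := (X.δ.ker × (X₁ ⧸ X.δ.range)) → F

/-- The grading projections of the vacuum object,
`P(m)(x ⊗ δ_{Iy}) = δ(m^y, x) (x ⊗ δ_{Iy})`, defined via a choice of coset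
representative. -/
noncomputable def vacuumP (m : X₂) : VacuumCarrier F X →ₗ[F] VacuumCarrier F X where
  toFun f := fun p => if X.act m (Quotient.out p.2) = (p.1 : X₂) then f p else 0
  map_add' f g := by funext p; by_cases h : X.act m (Quotient.out p.2) = (p.1 : X₂) <;> simp [h]
  map_smul' c f := by funext p; by_cases h : X.act m (Quotient.out p.2) = (p.1 : X₂) <;> simp [h]

/-- The `X₁`-action of the vacuum object, `Q(g)(x ⊗ δ_{Iy}) = x ⊗ δ_{Igy}`. -/
def vacuumQ (g : X₁) : VacuumCarrier F X →ₗ[F] VacuumCarrier F X where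
  toFun f := fun p => f (p.1, (QuotientGroup.mk g)⁻¹ * p.2)
  map_add' f g := by funext p; simp
  map_smul' c f := by funext p; simp

end Vacuum

/-! The only subtle point is that `P` is defined through a choice of representative `y` of the
coset `Iy`. Replacing `y` by `y ∂n` conjugates `m^y` by `n` (Peiffer identity), and `ker ∂` is
central in `X₂`, so for `x ∈ ker ∂` the condition `m^y = x` does not depend on the choice.
Once `P` may be computed with any representative, the axioms of `M(X)` follow from
`m ↦ m^y` being a bijection and from `(m^g)^(g⁻¹y) = m^y`. -/

namespace CrossedModule

variable {X₁ X₂ : Type} [Group X₁] [Group X₂] (X : CrossedModule X₁ X₂)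

theorem commute_of_mem_ker {x : X₂} (hx : x ∈ X.δ.ker) (a : X₂) : Commute x a := by
  have h := X.peiffer a x
  rw [hx, X.act_one] at h
  calc x * a = x * (x⁻¹ * a * x) := by rw [← h]
    _ = a * x := by group

theorem act_act_inv (m : X₂) (y : X₁) : X.act (X.act m y) y⁻¹ = m := by
  rw [← X.act_mul, mul_inv_cancel, X.act_one]

theorem act_inv_act (m : X₂) (y : X₁) : X.act (X.act m y⁻¹) y = m := by
  rw [← X.act_mul, inv_mul_cancel, X.act_one]

theorem act_left_injective (y : X₁) : Function.Injective fun m => X.act m y :=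
  Function.LeftInverse.injective (g := fun m => X.act m y⁻¹) fun m => X.act_act_inv m y

theorem act_mul_δ (m n : X₂) (y : X₁) : X.act m (y * X.δ n) = n⁻¹ * X.act m y * n := by
  rw [X.act_mul, X.peiffer]

theorem act_eq_iff_of_mk_eq {y y' : X₁} (h : (y : X₁ ⧸ X.δ.range) = y') {x : X₂}
    (hx : x ∈ X.δ.ker) (m : X₂) : X.act m y = x ↔ X.act m y' = x := by
  obtain ⟨n, hn⟩ := QuotientGroup.eq.mp h
  obtain rfl : y' = y * X.δ n := by rw [hn]; group
  have hconj : n * x * n⁻¹ = x := by rw [← (X.commute_of_mem_ker hx n).eq, mul_inv_cancel_right]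
  rw [X.act_mul_δ]
  conv_lhs => rw [← hconj]
  constructor
  · intro he; rw [he]; group
  · intro he; rw [← he]; group

end CrossedModule

section Vacuum

variable {F : Type} [Field F] {X₁ X₂ : Type} [Group X₁] [Group X₂] (X : CrossedModule X₁ X₂)

theorem vacuumP_apply_mk [DecidableEq X₂] (m : X₂) (f : VacuumCarrier F X) (x : X.δ.ker)
    (y : X₁) :
    vacuumP F X m f (x, QuotientGroup.mk y) =
      if X.act m y = (x : X₂) then f (x, QuotientGroup.mk y) else 0 :=
  if_congr (X.act_eq_iff_of_mk_eq (Quotient.out_eq _) x.2 m) rfl rfl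

theorem vacuumQ_apply_mk [X.δ.range.Normal] (g : X₁) (f : VacuumCarrier F X) (x : X.δ.ker)
    (y : X₁) :
    vacuumQ F X g f (x, QuotientGroup.mk y) = f (x, QuotientGroup.mk (g⁻¹ * y)) := rfl

theorem vacuumP_comp_vacuumP [DecidableEq X₂] (m n : X₂) :
    vacuumP F X m ∘ₗ vacuumP F X n = if m = n then vacuumP F X m else 0 := by
  ext f ⟨x, c⟩
  induction c using QuotientGroup.induction_on with | H y => ?_
  by_cases hmn : m = n
  · subst hmn
    simp only [if_true, LinearMap.comp_apply, vacuumP_apply_mk]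
    split_ifs <;> rfl
  · simp only [hmn, if_false, LinearMap.comp_apply, vacuumP_apply_mk, LinearMap.zero_apply,
      Pi.zero_apply]
    split_ifs with hm hn
    · exact absurd (X.act_left_injective y (hm.trans hn.symm)) hmn
    all_goals rfl

theorem sum_vacuumP [Fintype X₂] [DecidableEq X₂] : ∑ m : X₂, vacuumP F X m = LinearMap.id := by
  ext f ⟨x, c⟩
  induction c using QuotientGroup.induction_on with | H y => ?_
  have hdeg : ∀ m, X.act m y = x ↔ X.act (x : X₂) y⁻¹ = m := fun m =>
    ⟨fun h => h ▸ X.act_act_inv m y, fun h => h ▸ X.act_inv_act x y⟩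
  simp only [LinearMap.sum_apply, Finset.sum_apply, vacuumP_apply_mk, hdeg,
    Finset.sum_ite_eq, Finset.mem_univ, if_true, LinearMap.id_apply]

theorem vacuumQ_one [X.δ.range.Normal] : vacuumQ F X 1 = LinearMap.id := by
  ext f ⟨x, c⟩
  induction c using QuotientGroup.induction_on with | H y => ?_
  simp only [vacuumQ_apply_mk, inv_one, one_mul, LinearMap.id_apply]

theorem vacuumQ_mul [X.δ.range.Normal] (g h : X₁) :
    vacuumQ F X (g * h) = vacuumQ F X g ∘ₗ vacuumQ F X h := by
  ext f ⟨x, c⟩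
  induction c using QuotientGroup.induction_on with | H y => ?_
  simp only [LinearMap.comp_apply, vacuumQ_apply_mk, mul_inv_rev, mul_assoc]

theorem vacuumP_comp_vacuumQ [DecidableEq X₂] [X.δ.range.Normal] (m : X₂) (g : X₁) :
    vacuumP F X m ∘ₗ vacuumQ F X g = vacuumQ F X g ∘ₗ vacuumP F X (X.act m g) := by
  ext f ⟨x, c⟩
  induction c using QuotientGroup.induction_on with | H y => ?_
  simp only [LinearMap.comp_apply, vacuumQ_apply_mk, vacuumP_apply_mk, ← X.act_mul,
    mul_inv_cancel_left]

end Vacuum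

theorem vacuum_is_object_general {F : Type} [Field F]
    {X₁ X₂ : Type} [Group X₁] [Group X₂] [Fintype X₂] [DecidableEq X₂]
    (X : CrossedModule X₁ X₂) [X.δ.range.Normal] :
    -- well-definedness: the grading can be computed with any coset representative
    (∀ (m : X₂) (f : VacuumCarrier F X) (x : X.δ.ker) (y : X₁),
      vacuumP F X m f (x, QuotientGroup.mk y) =
        if X.act m y = (x : X₂) then f (x, QuotientGroup.mk y) else 0) ∧
    (∀ (g : X₁) (f : VacuumCarrier F X) (x : X.δ.ker) (y : X₁),
      vacuumQ F X g f (x, QuotientGroup.mk y) = f (x, QuotientGroup.mk (g⁻¹ * y))) ∧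
    -- the data defines an object of `M(X)`
    (∀ m n : X₂, vacuumP F X m ∘ₗ vacuumP F X n = if m = n then vacuumP F X m else 0) ∧
    ((∑ m : X₂, vacuumP F X m) = LinearMap.id) ∧
    (vacuumQ F X 1 = LinearMap.id) ∧
    (∀ g h : X₁, vacuumQ F X (g * h) = vacuumQ F X g ∘ₗ vacuumQ F X h) ∧
    (∀ (m : X₂) (g : X₁),
      vacuumP F X m ∘ₗ vacuumQ F X g = vacuumQ F X g ∘ₗ vacuumP F X (X.act m g)) :=
  ⟨vacuumP_apply_mk X, vacuumQ_apply_mk X, vacuumP_comp_vacuumP X, sum_vacuumP X, vacuumQ_one X,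
    vacuumQ_mul X, vacuumP_comp_vacuumQ X⟩

/-- The vacuum object `V_K = k[ker ∂] ⊗ k(coker ∂)` with
`P(m)(x ⊗ δ_{Iy}) = δ(m^y, x)(x ⊗ δ_{Iy})` and `Q(g)(x ⊗ δ_{Iy}) = x ⊗ δ_{Igy}`
is a well-defined object of `M(X)`: the formula for `P` is independent of the
chosen coset representative `y`, `P` is a complete family of orthogonal
projections, `Q` is an action of `X₁`, and `P(m)Q(g) = Q(g)P(m^g)`. -/
theorem vacuum_is_object {F : Type} [Field F] [IsAlgClosed F] [CharZero F]
    {X₁ X₂ : Type} [Group X₁] [Group X₂] [Fintype X₁] [Fintype X₂] [DecidableEq X₂]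
    (X : CrossedModule X₁ X₂) [X.δ.range.Normal] :
    -- well-definedness: the grading can be computed with any coset representative
    (∀ (m : X₂) (f : VacuumCarrier F X) (x : X.δ.ker) (y : X₁),
      vacuumP F X m f (x, QuotientGroup.mk y) =
        if X.act m y = (x : X₂) then f (x, QuotientGroup.mk y) else 0) ∧
    (∀ (g : X₁) (f : VacuumCarrier F X) (x : X.δ.ker) (y : X₁),
      vacuumQ F X g f (x, QuotientGroup.mk y) = f (x, QuotientGroup.mk (g⁻¹ * y))) ∧
    -- the data defines an object of `M(X)`
    (∀ m n : X₂, vacuumP F X m ∘ₗ vacuumP F X n = if m = n then vacuumP F X m else 0) ∧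
    ((∑ m : X₂, vacuumP F X m) = LinearMap.id) ∧
    (vacuumQ F X 1 = LinearMap.id) ∧
    (∀ g h : X₁, vacuumQ F X (g * h) = vacuumQ F X g ∘ₗ vacuumQ F X h) ∧
    (∀ (m : X₂) (g : X₁),
      vacuumP F X m ∘ₗ vacuumQ F X g = vacuumQ F X g ∘ₗ vacuumP F X (X.act m g)) :=
  vacuum_is_object_general X
end

section
/- In the braided category M(X) of representations of a finite crossed module X, every simple object p that is a direct summand of the vacuum object V_K satisfies S_{pq} = d_p · S_{1q} for all simple q, where d_p is the dimension of p; i.e., its row of the S-matrix is collinear with that of the tensor unit. -/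
section Simple

variable {F : Type} [Field F] {X₁ X₂ : Type} [Group X₁] [Group X₂]
  [Fintype X₁] [Fintype X₂] [DecidableEq X₂] {X : CrossedModule X₁ X₂}
  {V : Type} [AddCommGroup V] [Module F V]

/-- A representation of a crossed module is simple if it is nonzero and has no
nontrivial invariant subspace. -/
def XRep.IsSimple (A : XRep F X V) : Prop :=
  Nontrivial V ∧
  ∀ S : Submodule F V,
    (∀ m : X₂, S.map (A.P m) ≤ S) → (∀ g : X₁, S.map (A.Q g) ≤ S) →
    S = ⊥ ∨ S = ⊤

/-- `A` is a direct summand (retract) of the vacuum object `V_K`. -/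
def IsVacuumSummand [X.δ.range.Normal] (A : XRep F X V) : Prop :=
  ∃ (ι : V →ₗ[F] VacuumCarrier F X) (π : VacuumCarrier F X →ₗ[F] V),
    (∀ m : X₂, ι ∘ₗ A.P m = vacuumP F X m ∘ₗ ι) ∧
    (∀ g : X₁, ι ∘ₗ A.Q g = vacuumQ F X g ∘ₗ ι) ∧
    (∀ m : X₂, π ∘ₗ vacuumP F X m = A.P m ∘ₗ π) ∧
    (∀ g : X₁, π ∘ₗ vacuumQ F X g = A.Q g ∘ₗ π) ∧
    π ∘ₗ ι = LinearMap.id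

end Simple

/-!
A direct summand of the vacuum object inherits two properties from `V_K`: it is concentrated
in the degrees `m` with `∂m = 1`, and `∂(X₂)` acts trivially on it. Each summand
`Q(∂n)P(m) ⊗ P(n)Q(∂m)` of the double braiding `R_{qp} ∘ R_{pq}` then reduces to
`P(m) ⊗ P(n)`, so the double braiding is the identity of `p ⊗ q` and its trace is `d_p d_q`.
-/

open TensorProduct

section Braiding

variable {F : Type} [Field F] {X₁ X₂ : Type} [Group X₁] [Group X₂] [Fintype X₂]
  {X : CrossedModule X₁ X₂} {V W : Type} [AddCommGroup V] [Module F V] [AddCommGroup W] [Module F W]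
  {PA : X₂ → V →ₗ[F] V} {QA : X₁ → V →ₗ[F] V} {PB : X₂ → W →ₗ[F] W} {QB : X₁ → W →ₗ[F] W}

theorem braidAux_comp_braidAux :
    braidAux X PB QA ∘ₗ braidAux X PA QB =
      ∑ n : X₂, ∑ m : X₂, map (QA (X.δ n) ∘ₗ PA m) (PB n ∘ₗ QB (X.δ m)) := by
  refine TensorProduct.ext' fun v w => ?_
  simp only [braidAux, LinearMap.coe_sum, LinearMap.comp_apply, Finset.sum_apply,
    LinearEquiv.coe_coe, comm_tmul, map_tmul, map_sum]
  exact Finset.sum_comm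

theorem braidAux_comp_braidAux_eq_id (hPA : ∀ m, X.δ m ≠ 1 → PA m = 0)
    (hQA : ∀ n, QA (X.δ n) = LinearMap.id) (hQB : QB 1 = LinearMap.id)
    (hPA_total : ∑ m, PA m = LinearMap.id) (hPB_total : ∑ n, PB n = LinearMap.id) :
    braidAux X PB QA ∘ₗ braidAux X PA QB = LinearMap.id := by
  have hterm : ∀ n m, map (QA (X.δ n) ∘ₗ PA m) (PB n ∘ₗ QB (X.δ m)) = map (PA m) (PB n) := by
    intro n m
    rw [hQA, LinearMap.id_comp]
    by_cases hm : X.δ m = 1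
    · rw [hm, hQB, LinearMap.comp_id]
    · simp [hPA m hm]
  simp_rw [braidAux_comp_braidAux, hterm]
  refine TensorProduct.ext' fun v w => ?_
  simp only [LinearMap.coe_sum, Finset.sum_apply, map_tmul, ← sum_tmul, ← tmul_sum,
    ← LinearMap.sum_apply, hPA_total, hPB_total, LinearMap.id_apply]

end Braiding

theorem vacuumP_eq_zero (F : Type) [Field F] {X₁ X₂ : Type} [Group X₁] [Group X₂]
    [DecidableEq X₂] {X : CrossedModule X₁ X₂} {m : X₂} (hm : X.δ m ≠ 1) :
    vacuumP F X m = 0 := by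
  have hgrade : ∀ p : X.δ.ker × (X₁ ⧸ X.δ.range), X.act m p.2.out ≠ p.1 := by
    intro p h
    have hker : X.δ (X.act m p.2.out) = 1 := h ▸ p.1.2
    rw [X.equivariance] at hker
    exact hm ((conj_eq_one_iff (a := p.2.out⁻¹)).mp (by rwa [inv_inv]))
  ext f p
  simp [vacuumP, hgrade p]

theorem vacuumQ_δ (F : Type) [Field F] {X₁ X₂ : Type} [Group X₁] [Group X₂]
    {X : CrossedModule X₁ X₂} [X.δ.range.Normal] (n : X₂) :
    vacuumQ F X (X.δ n) = LinearMap.id := by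
  have hn : (QuotientGroup.mk (X.δ n) : X₁ ⧸ X.δ.range) = 1 :=
    (QuotientGroup.eq_one_iff _).mpr ⟨n, rfl⟩
  ext f p
  simp [vacuumQ, hn]

theorem LinearMap.eq_comp_comp_of_retract {R U V : Type} [Semiring R] [AddCommMonoid U]
    [Module R U] [AddCommMonoid V] [Module R V] {i : V →ₗ[R] U} {r : U →ₗ[R] V}
    (hri : r ∘ₗ i = LinearMap.id) {f : V →ₗ[R] V} {g : U →ₗ[R] U} (hfg : i ∘ₗ f = g ∘ₗ i) :
    f = r ∘ₗ g ∘ₗ i := by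
  rw [← hfg, ← LinearMap.comp_assoc, hri, LinearMap.id_comp]

namespace IsVacuumSummand

variable {F : Type} [Field F] {X₁ X₂ : Type} [Group X₁] [Group X₂] [Fintype X₂] [DecidableEq X₂]
  {X : CrossedModule X₁ X₂} [X.δ.range.Normal] {V : Type} [AddCommGroup V] [Module F V]
  {A : XRep F X V}

theorem P_eq_zero (hA : IsVacuumSummand A) (m : X₂) (hm : X.δ m ≠ 1) : A.P m = 0 := by
  obtain ⟨i, r, hiP, -, -, -, hri⟩ := hA
  rw [LinearMap.eq_comp_comp_of_retract hri (hiP m), vacuumP_eq_zero F hm]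
  simp

theorem Q_δ (hA : IsVacuumSummand A) (n : X₂) : A.Q (X.δ n) = LinearMap.id := by
  obtain ⟨i, r, -, hiQ, -, -, hri⟩ := hA
  rw [LinearMap.eq_comp_comp_of_retract hri (hiQ (X.δ n)), vacuumQ_δ, LinearMap.id_comp, hri]

end IsVacuumSummand

theorem vacuum_summand_S_row_general {F : Type} [Field F]
    {X₁ X₂ : Type} [Group X₁] [Group X₂] [Fintype X₂] [DecidableEq X₂]
    {X : CrossedModule X₁ X₂} [X.δ.range.Normal]
    {V : Type} [AddCommGroup V] [Module F V] [FiniteDimensional F V]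
    (A : XRep F X V) (hsum : IsVacuumSummand A)
    {W : Type} [AddCommGroup W] [Module F W] [FiniteDimensional F W]
    (B : XRep F X W) :
    LinearMap.trace F (TensorProduct F V W)
        (braidAux X B.P A.Q ∘ₗ braidAux X A.P B.Q) =
      (Module.finrank F V : F) * (Module.finrank F W : F) := by
  rw [braidAux_comp_braidAux_eq_id hsum.P_eq_zero hsum.Q_δ B.Q_one A.P_total B.P_total,
    LinearMap.trace_id, Module.finrank_tensorProduct, Nat.cast_mul]

/-- Every simple object `p` of `M(X)` that is a direct summand of the vacuum object
`V_K` has its `S`-matrix row collinear with that of the tensor unit: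
`S_{pq} = d_p · S_{1q}` for all simple `q`; equivalently, since
`S_{pq} = tr(R_{qp} ∘ R_{pq})/|X|` and `S_{1q} = d_q/|X|`, the unnormalized
`S`-matrix entry equals `d_p · d_q`. -/
theorem vacuum_summand_S_row {F : Type} [Field F] [IsAlgClosed F] [CharZero F]
    {X₁ X₂ : Type} [Group X₁] [Group X₂] [Fintype X₁] [Fintype X₂] [DecidableEq X₂]
    {X : CrossedModule X₁ X₂} [X.δ.range.Normal]
    {V : Type} [AddCommGroup V] [Module F V] [FiniteDimensional F V]
    (A : XRep F X V) (hA : A.IsSimple) (hsum : IsVacuumSummand A)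
    {W : Type} [AddCommGroup W] [Module F W] [FiniteDimensional F W]
    (B : XRep F X W) (hB : B.IsSimple) :
    LinearMap.trace F (TensorProduct F V W)
        (braidAux X B.P A.Q ∘ₗ braidAux X A.P B.Q) =
      (Module.finrank F V : F) * (Module.finrank F W : F) :=
  vacuum_summand_S_row_general A hsum B
end
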